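/- With the setup of a finite probability space of samples (x,y), if ε(p) := E[-log p(y)] denotes the expected log-loss of a predictive distribution p, then the mixture model satisfies ε(p^π) ≤ ∑_{i=0}^K π_i ε(p_{t_i}), where p^π is the softmax of the π-weighted sum of the score functions of p_{t_0},…,p_{t_K}. -/

import Mathlib

open Real Finset

/-!
The log-loss of a softmax predictor with scores `f` at label `y` is `logSumExp f - f y`.
The second term is linear in the scores and `logSumExp` is convex (Jensen's inequality for
`exp`, after normalising each score function so that its exponentials sum to one), so the
log-loss of the mixture is pointwise at most the mixture of the log-losses; averaging over
samples preserves the inequality.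
-/

noncomputable def logSumExp {𝒴 : Type*} [Fintype 𝒴] (f : 𝒴 → ℝ) : ℝ :=
  log (∑ l, exp (f l))

section LogSumExp

variable {ι 𝒴 : Type*} [Fintype ι] [Fintype 𝒴]

lemma sum_exp_pos [Nonempty 𝒴] (f : 𝒴 → ℝ) : 0 < ∑ l, exp (f l) :=
  sum_pos (fun l _ => exp_pos (f l)) univ_nonempty

lemma exp_logSumExp [Nonempty 𝒴] (f : 𝒴 → ℝ) : exp (logSumExp f) = ∑ l, exp (f l) :=
  exp_log (sum_exp_pos f)

lemma sum_exp_sub_logSumExp [Nonempty 𝒴] (f : 𝒴 → ℝ) :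
    ∑ l, exp (f l - logSumExp f) = 1 := by
  simp_rw [exp_sub, ← sum_div, exp_logSumExp]
  exact div_self (sum_exp_pos f).ne'

lemma sum_exp_weighted_sum_le {w : ι → ℝ} (hw : ∀ i, 0 ≤ w i) (hw1 : ∑ i, w i = 1)
    (b : ι → 𝒴 → ℝ) :
    ∑ l, exp (∑ i, w i * b i l) ≤ ∑ i, w i * ∑ l, exp (b i l) := by
  calc ∑ l, exp (∑ i, w i * b i l)
      ≤ ∑ l, ∑ i, w i * exp (b i l) := sum_le_sum fun l _ =>
        convexOn_exp.map_sum_le (fun i _ => hw i) hw1 fun i _ => Set.mem_univ (b i l)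
    _ = ∑ i, w i * ∑ l, exp (b i l) := by
        rw [sum_comm]
        simp_rw [mul_sum]

lemma logSumExp_weighted_sum_le [Nonempty 𝒴] {w : ι → ℝ} (hw : ∀ i, 0 ≤ w i)
    (hw1 : ∑ i, w i = 1) (a : ι → 𝒴 → ℝ) :
    logSumExp (fun l => ∑ i, w i * a i l) ≤ ∑ i, w i * logSumExp (a i) := by
  set c := ∑ i, w i * logSumExp (a i)
  have hshift : ∀ l, ∑ i, w i * a i l = ∑ i, w i * (a i l - logSumExp (a i)) + c := by
    intro l
    simp only [c, mul_sub, sum_sub_distrib, sub_add_cancel]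
  have hbound : ∑ l, exp (∑ i, w i * a i l) ≤ exp c :=
    calc ∑ l, exp (∑ i, w i * a i l)
        = (∑ l, exp (∑ i, w i * (a i l - logSumExp (a i)))) * exp c := by
          simp_rw [hshift, exp_add, sum_mul]
      _ ≤ (∑ i, w i * ∑ l, exp (a i l - logSumExp (a i))) * exp c :=
          mul_le_mul_of_nonneg_right (sum_exp_weighted_sum_le hw hw1 _) (exp_pos c).le
      _ = exp c := by simp_rw [sum_exp_sub_logSumExp, mul_one, hw1, one_mul]
  exact (log_le_iff_le_exp (sum_exp_pos _)).2 hbound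

lemma neg_log_softmax (f : 𝒴 → ℝ) (y : 𝒴) :
    -log (exp (f y) / ∑ l, exp (f l)) = logSumExp f - f y := by
  have : Nonempty 𝒴 := ⟨y⟩
  rw [log_div (exp_pos _).ne' (sum_exp_pos f).ne', log_exp, logSumExp]
  ring

lemma neg_log_softmax_weighted_sum_le {w : ι → ℝ} (hw : ∀ i, 0 ≤ w i) (hw1 : ∑ i, w i = 1)
    (a : ι → 𝒴 → ℝ) (y : 𝒴) :
    -log (exp (∑ i, w i * a i y) / ∑ l, exp (∑ i, w i * a i l)) ≤
      ∑ i, w i * -log (exp (a i y) / ∑ l, exp (a i l)) := by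
  have : Nonempty 𝒴 := ⟨y⟩
  simp_rw [neg_log_softmax (fun l => ∑ i, w i * a i l), neg_log_softmax, mul_sub,
    sum_sub_distrib]
  linarith [logSumExp_weighted_sum_le hw hw1 a]

end LogSumExp

theorem mixture_expected_error_le_general {Ω 𝒴 : Type*} [Fintype Ω] [Fintype 𝒴]
    (K : ℕ) (μ : Ω → ℝ) (hμ : ∀ ω, 0 ≤ μ ω)
    (Y : Ω → 𝒴) (s : Fin (K + 1) → Ω → 𝒴 → ℝ) (pw : Fin (K + 1) → ℝ) (τ : ℝ)
    (hpw : ∀ i, 0 ≤ pw i) (hpw1 : ∑ i, pw i = 1) :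
    ∑ ω, μ ω * (-Real.log (Real.exp ((∑ i, pw i * s i ω (Y ω)) / τ) /
        ∑ l', Real.exp ((∑ i, pw i * s i ω l') / τ))) ≤
      ∑ i, pw i * ∑ ω, μ ω * (-Real.log (Real.exp (s i ω (Y ω) / τ) /
        ∑ l', Real.exp (s i ω l' / τ))) := by
  simp_rw [sum_div, mul_div_assoc]
  calc _ ≤ ∑ ω, μ ω * ∑ i, pw i * -log (exp (s i ω (Y ω) / τ) / ∑ l, exp (s i ω l / τ)) :=
        sum_le_sum fun ω _ => mul_le_mul_of_nonneg_left
          (neg_log_softmax_weighted_sum_le hpw hpw1 (fun i l => s i ω l / τ) (Y ω)) (hμ ω)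
    _ = _ := by
        simp_rw [mul_sum, mul_left_comm (μ _)]
        exact sum_comm

/-- Theorem 3.2: the expected log-loss of the mixture model is bounded by the
convex combination of the expected log-losses of the individual predictors.
Samples `(x, y)` range over a finite space `Ω` with probability weights `μ`;
`Y ω` is the label of sample `ω` and `s i ω : 𝒴 → ℝ` is the score function of
prompt `i` on sample `ω`. -/
theorem mixture_expected_error_le {Ω 𝒴 : Type*} [Fintype Ω] [Fintype 𝒴] [Nonempty 𝒴]
    (K : ℕ) (μ : Ω → ℝ) (hμ : ∀ ω, 0 ≤ μ ω) (hμ1 : ∑ ω, μ ω = 1)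
    (Y : Ω → 𝒴) (s : Fin (K + 1) → Ω → 𝒴 → ℝ) (pw : Fin (K + 1) → ℝ) (τ : ℝ)
    (hτ : 0 < τ) (hpw : ∀ i, 0 ≤ pw i) (hpw1 : ∑ i, pw i = 1) :
    ∑ ω, μ ω * (-Real.log (Real.exp ((∑ i, pw i * s i ω (Y ω)) / τ) /
        ∑ l', Real.exp ((∑ i, pw i * s i ω l') / τ))) ≤
      ∑ i, pw i * ∑ ω, μ ω * (-Real.log (Real.exp (s i ω (Y ω) / τ) /
        ∑ l', Real.exp (s i ω l' / τ))) :=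
  mixture_expected_error_le_general K μ hμ Y s pw τ hpw hpw1
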